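/- arXiv:1803.00817 — 4 statements merged into one kernel-verified Lean document; each statement's English description precedes it below -/
import Mathlib

section
/- Small-gain bound: Suppose vectors |y| ∈ ℝ^m, |z|, |v| ∈ ℝ^ℓ, |u| ∈ ℝ^n (all entrywise nonnegative) satisfy |y| ≤ γ_{yu}|u| + γ_{yv}|v|, |z| ≤ γ_{zu}|u| + γ_{zv}|v|, and |v| ≤ γ_ψ|z|, where all gain matrices are entrywise nonnegative and ρ(γ_{zv} γ_ψ) < 1. Then |z| ≤ (I − γ_{zv}γ_ψ)^{-1} γ_{zu} |u| and |y| ≤ [γ_{yu} + γ_{yv} γ_ψ (I − γ_{zv}γ_ψ)^{-1} γ_{zu}] |u| (all inequalities entrywise). -/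
/-!
Write `A = γ_{zv} γ_ψ`. Feeding `|v| ≤ γ_ψ |z|` into the bound on `|z|` gives `(1 - A) |z| ≤ γ_{zu} |u|`.
By Gelfand's formula `ρ(A) < 1` forces `A ^ N → 0`; hence `1 - A` is invertible and
`(1 - A)⁻¹ = ∑ₖ Aᵏ` is entrywise nonnegative, so applying it preserves the inequality.
The bound on `|y|` then follows by monotonicity of nonnegative matrices.
-/

noncomputable def specRad {l : ℕ} (M : Matrix (Fin l) (Fin l) ℝ) : ENNReal :=
  spectralRadius ℂ (M.map (algebraMap ℝ ℂ))

open Matrix Filter Topology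

theorem spectrum.tendsto_pow_atTop_nhds_zero_of_spectralRadius_lt_one {A : Type*} [NormedRing A]
    [NormedAlgebra ℂ A] [CompleteSpace A] {a : A} (ha : spectralRadius ℂ a < 1) :
    Tendsto (a ^ ·) atTop (𝓝 0) := by
  obtain ⟨r, hρr, hr1⟩ := ENNReal.lt_iff_exists_nnreal_btwn.mp ha
  have hr1 : (r : ℝ) < 1 := by exact_mod_cast hr1
  have hbound : ∀ᶠ N : ℕ in atTop, ‖a ^ N‖ ≤ (r : ℝ) ^ N := by
    filter_upwards [(pow_nnnorm_pow_one_div_tendsto_nhds_spectralRadius a).eventually_lt_const hρr,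
      eventually_gt_atTop 0] with N hN hN0
    rw [one_div, ENNReal.rpow_inv_lt_iff (by positivity), ENNReal.rpow_natCast] at hN
    exact_mod_cast hN.le
  exact squeeze_zero_norm' hbound (tendsto_pow_atTop_nhds_zero_of_lt_one r.2 hr1)

section SpectralRadius

-- Any Banach algebra norm will do; the `ℓ∞` operator norm induces the product topology.
attribute [local instance] Matrix.linftyOpNormedRing Matrix.linftyOpNormedAlgebra

theorem tendsto_pow_atTop_nhds_zero_of_specRad_lt_one {l : ℕ} {A : Matrix (Fin l) (Fin l) ℝ}
    (hA : specRad A < 1) : Tendsto (A ^ ·) atTop (𝓝 0) := by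
  have : CompleteSpace (Matrix (Fin l) (Fin l) ℂ) := FiniteDimensional.complete ℂ _
  have hB := spectrum.tendsto_pow_atTop_nhds_zero_of_spectralRadius_lt_one hA
  have hre : Continuous fun M : Matrix (Fin l) (Fin l) ℂ => M.map Complex.re :=
    continuous_id.matrix_map Complex.continuous_re
  convert (hre.tendsto 0).comp hB using 1
  · ext N i j
    rw [Function.comp_apply, ← (algebraMap ℝ ℂ).mapMatrix_apply, ← map_pow]
    simp
  · simp

end SpectralRadius

namespace Matrix

section OrderedSemiring

variable {ι κ μ α : Type*} [Semiring α] [PartialOrder α] [IsOrderedRing α] [Fintype κ]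

theorem mul_apply_nonneg {M : Matrix ι κ α} {N : Matrix κ μ α} (hM : ∀ i j, 0 ≤ M i j)
    (hN : ∀ i j, 0 ≤ N i j) (i : ι) (k : μ) : 0 ≤ (M * N) i k :=
  Finset.sum_nonneg fun j _ => mul_nonneg (hM i j) (hN j k)

theorem mulVec_mono_of_nonneg {M : Matrix ι κ α} (hM : ∀ i j, 0 ≤ M i j) {x y : κ → α}
    (hxy : x ≤ y) : M *ᵥ x ≤ M *ᵥ y :=
  fun i => dotProduct_le_dotProduct_of_nonneg_left hxy (hM i)

end OrderedSemiring

variable {ι : Type*} [Fintype ι] [DecidableEq ι]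

theorem isUnit_det_one_sub_of_tendsto_pow {A : Matrix ι ι ℝ}
    (hA : Tendsto (A ^ ·) atTop (𝓝 0)) : IsUnit (1 - A).det := by
  rw [← isUnit_iff_isUnit_det, ← mulVec_injective_iff_isUnit, ← coe_mulVecLin, injective_iff_map_eq_zero]
  intro x hx
  have hfix : ∀ N : ℕ, (A ^ N) *ᵥ x = x := by
    have hAx : A *ᵥ x = x := by
      rwa [mulVecLin_apply, sub_mulVec, one_mulVec, sub_eq_zero, eq_comm] at hx
    intro N
    induction N with
    | zero => simp
    | succ N ih => rw [pow_succ, ← mulVec_mulVec, hAx, ih]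
  have hlim : Tendsto (fun N : ℕ => (A ^ N) *ᵥ x) atTop (𝓝 ((0 : Matrix ι ι ℝ) *ᵥ x)) :=
    ((continuous_id.matrix_mulVec continuous_const).tendsto 0).comp hA
  simp only [hfix, zero_mulVec] at hlim
  exact tendsto_nhds_unique tendsto_const_nhds hlim

theorem inv_one_sub_apply_nonneg {A : Matrix ι ι ℝ} (hA0 : ∀ i j, 0 ≤ A i j)
    (hA : Tendsto (A ^ ·) atTop (𝓝 0)) (i j : ι) : 0 ≤ (1 - A)⁻¹ i j := by
  set C := (1 - A)⁻¹
  have hC : C * (1 - A) = 1 := nonsing_inv_mul _ (isUnit_det_one_sub_of_tendsto_pow hA)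
  have hpartial : ∀ N, C - C * A ^ N = ∑ k ∈ Finset.range N, A ^ k := fun N => by
    rw [← mul_one_sub, ← mul_neg_geom_sum, ← Matrix.mul_assoc, hC, Matrix.one_mul]
  have hlim : Tendsto (fun N : ℕ => C - C * A ^ N) atTop (𝓝 C) := by
    simpa using tendsto_const_nhds.sub (hA.const_mul C)
  refine ge_of_tendsto' ((continuous_id.matrix_elem i j).tendsto C |>.comp hlim) fun N => ?_
  simp only [Function.comp_apply, id_eq, hpartial, sum_apply]
  exact Finset.sum_nonneg fun k _ => pow_apply_nonneg hA0 k i j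

theorem le_inv_one_sub_mulVec {A : Matrix ι ι ℝ} (hA0 : ∀ i j, 0 ≤ A i j)
    (hA : Tendsto (A ^ ·) atTop (𝓝 0)) {z b : ι → ℝ} (h : z ≤ b + A *ᵥ z) :
    z ≤ (1 - A)⁻¹ *ᵥ b := by
  have hsub : (1 - A) *ᵥ z ≤ b := by
    rw [sub_mulVec, one_mulVec]
    exact sub_le_iff_le_add.mpr h
  calc z = (1 - A)⁻¹ *ᵥ ((1 - A) *ᵥ z) := by
        rw [mulVec_mulVec, nonsing_inv_mul _ (isUnit_det_one_sub_of_tendsto_pow hA), one_mulVec]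
    _ ≤ (1 - A)⁻¹ *ᵥ b := mulVec_mono_of_nonneg (inv_one_sub_apply_nonneg hA0 hA) hsub

end Matrix

theorem small_gain_bound_general {m n l : ℕ}
    (γyu : Matrix (Fin m) (Fin n) ℝ) (γyv : Matrix (Fin m) (Fin l) ℝ)
    (γzu : Matrix (Fin l) (Fin n) ℝ) (γzv γψ : Matrix (Fin l) (Fin l) ℝ)
    (hyv : ∀ i j, 0 ≤ γyv i j)
    (hzv : ∀ i j, 0 ≤ γzv i j)
    (hψ : ∀ i j, 0 ≤ γψ i j)
    (hρ : specRad (γzv * γψ) < 1)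
    (y : Fin m → ℝ) (z v : Fin l → ℝ) (u : Fin n → ℝ)
    (hy : ∀ i, y i ≤ (γyu.mulVec u + γyv.mulVec v) i)
    (hz : ∀ i, z i ≤ (γzu.mulVec u + γzv.mulVec v) i)
    (hv : ∀ i, v i ≤ (γψ.mulVec z) i) :
    (∀ i, z i ≤ (((1 - γzv * γψ)⁻¹ * γzu).mulVec u) i) ∧
    (∀ i, y i ≤ ((γyu + γyv * γψ * (1 - γzv * γψ)⁻¹ * γzu).mulVec u) i) := by
  have hloop : z ≤ γzu *ᵥ u + (γzv * γψ) *ᵥ z := calc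
    z ≤ γzu *ᵥ u + γzv *ᵥ v := hz
    _ ≤ γzu *ᵥ u + γzv *ᵥ (γψ *ᵥ z) := add_le_add_right (mulVec_mono_of_nonneg hzv hv) _
    _ = γzu *ᵥ u + (γzv * γψ) *ᵥ z := by rw [mulVec_mulVec]
  have hzbound : z ≤ ((1 - γzv * γψ)⁻¹ * γzu) *ᵥ u := by
    rw [← mulVec_mulVec]
    exact le_inv_one_sub_mulVec (mul_apply_nonneg hzv hψ)
      (tendsto_pow_atTop_nhds_zero_of_specRad_lt_one hρ) hloop
  refine ⟨hzbound, ?_⟩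
  calc y ≤ γyu *ᵥ u + γyv *ᵥ v := hy
    _ ≤ γyu *ᵥ u + (γyv * γψ) *ᵥ z := by
      rw [← mulVec_mulVec]
      exact add_le_add_right (mulVec_mono_of_nonneg hyv hv) _
    _ ≤ γyu *ᵥ u + (γyv * γψ) *ᵥ (((1 - γzv * γψ)⁻¹ * γzu) *ᵥ u) :=
      add_le_add_right (mulVec_mono_of_nonneg (mul_apply_nonneg hyv hψ) hzbound) _
    _ = (γyu + γyv * γψ * (1 - γzv * γψ)⁻¹ * γzu) *ᵥ u := by
      rw [mulVec_mulVec, add_mulVec, Matrix.mul_assoc (γyv * γψ)]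

theorem small_gain_bound {m n l : ℕ}
    (γyu : Matrix (Fin m) (Fin n) ℝ) (γyv : Matrix (Fin m) (Fin l) ℝ)
    (γzu : Matrix (Fin l) (Fin n) ℝ) (γzv γψ : Matrix (Fin l) (Fin l) ℝ)
    (hyu : ∀ i j, 0 ≤ γyu i j) (hyv : ∀ i j, 0 ≤ γyv i j)
    (hzu : ∀ i j, 0 ≤ γzu i j) (hzv : ∀ i j, 0 ≤ γzv i j)
    (hψ : ∀ i j, 0 ≤ γψ i j)
    (hρ : specRad (γzv * γψ) < 1)
    (y : Fin m → ℝ) (z v : Fin l → ℝ) (u : Fin n → ℝ)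
    (hy0 : ∀ i, 0 ≤ y i) (hz0 : ∀ i, 0 ≤ z i) (hv0 : ∀ i, 0 ≤ v i)
    (hu0 : ∀ i, 0 ≤ u i)
    (hy : ∀ i, y i ≤ (γyu.mulVec u + γyv.mulVec v) i)
    (hz : ∀ i, z i ≤ (γzu.mulVec u + γzv.mulVec v) i)
    (hv : ∀ i, v i ≤ (γψ.mulVec z) i) :
    (∀ i, z i ≤ (((1 - γzv * γψ)⁻¹ * γzu).mulVec u) i) ∧
    (∀ i, y i ≤ ((γyu + γyv * γψ * (1 - γzv * γψ)⁻¹ * γzu).mulVec u) i) :=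
  small_gain_bound_general γyu γyv γzu γzv γψ hyv hzv hψ hρ y z v u hy hz hv
end

section
/- Constrained-input bound: Let γ_{zu} ∈ ℝ^{ℓ×n}, γ_{zv}, γ_ψ ∈ ℝ^{ℓ×ℓ} be entrywise nonnegative, and suppose there exist ū ∈ ℝ^n, z̄ ∈ ℝ^ℓ with ū ≥ 0, z̄ ≥ 0 and γ_{zu} ū < (I − γ_{zv} γ_ψ) z̄ (entrywise strict). Then for any nonnegative vectors |u| ≤ ū, |z|, |v| satisfying |z| ≤ γ_{zu}|u| + γ_{zv}|v| and |v| ≤ γ_ψ |z|, it holds that |z| ≤ z̄ entrywise. -/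
/-! The interconnection reduces to the single inequality `z ≤ γzu ū + A z` with
`A = γzv γψ ≥ 0`, and the hypothesis says that `z̄` is a strict supersolution:
`γzu ū + A z̄ < z̄`. The difference `w = z - z̄` then satisfies `w ≤ A w`, and a maximum
principle forbids this unless `w ≤ 0`: if `c = maxᵢ wᵢ / z̄ᵢ` were positive, then at a
maximising index `wᵢ ≤ (A w)ᵢ ≤ c (A z̄)ᵢ < c z̄ᵢ = wᵢ`. -/

open Finset

namespace Matrix

variable {m ι 𝕜 : Type*}

theorem mulVec_le_mulVec_of_nonneg [Fintype ι] [Semiring 𝕜] [PartialOrder 𝕜]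
    [IsOrderedRing 𝕜] {A : Matrix m ι 𝕜} (hA : ∀ i j, 0 ≤ A i j) {x y : ι → 𝕜}
    (hxy : x ≤ y) : A *ᵥ x ≤ A *ᵥ y :=
  fun i => dotProduct_le_dotProduct_of_nonneg_left hxy (hA i)

theorem mulVec_nonneg_of_nonneg [Fintype ι] [Semiring 𝕜] [PartialOrder 𝕜]
    [IsOrderedRing 𝕜] {A : Matrix m ι 𝕜} (hA : ∀ i j, 0 ≤ A i j) {x : ι → 𝕜}
    (hx : 0 ≤ x) : 0 ≤ A *ᵥ x :=
  fun i => dotProduct_nonneg_of_nonneg (hA i) hx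

theorem mul_nonneg_of_nonneg [Fintype ι] [Semiring 𝕜] [PartialOrder 𝕜] [IsOrderedRing 𝕜]
    {A : Matrix m ι 𝕜} {B : Matrix ι m 𝕜} (hA : ∀ i j, 0 ≤ A i j) (hB : ∀ i j, 0 ≤ B i j) :
    ∀ i j, 0 ≤ (A * B) i j :=
  fun i j => dotProduct_nonneg_of_nonneg (hA i) (fun k => hB k j)

variable [Fintype ι] [Field 𝕜] [LinearOrder 𝕜] [IsStrictOrderedRing 𝕜]
  {A : Matrix ι ι 𝕜} {x : ι → 𝕜}

theorem nonpos_of_le_mulVec (hA : ∀ i j, 0 ≤ A i j) (hx : ∀ i, 0 < x i)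
    (hAx : ∀ i, (A *ᵥ x) i < x i) {w : ι → 𝕜} (hw : w ≤ A *ᵥ w) : w ≤ 0 := by
  intro i
  by_contra! hwi
  obtain ⟨i₀, -, hmax⟩ :=
    exists_max_image univ (fun j => w j / x j) ⟨i, mem_univ i⟩
  set c := w i₀ / x i₀
  have hc : 0 < c := (div_pos hwi (hx i)).trans_le (hmax i (mem_univ i))
  have hwc : w ≤ c • x := fun j => (div_le_iff₀ (hx j)).mp (hmax j (mem_univ j))
  have : w i₀ < w i₀ := calc
    w i₀ ≤ (A *ᵥ w) i₀ := hw i₀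
    _ ≤ (A *ᵥ (c • x)) i₀ := mulVec_le_mulVec_of_nonneg hA hwc i₀
    _ = c * (A *ᵥ x) i₀ := by rw [mulVec_smul, Pi.smul_apply, smul_eq_mul]
    _ < c * x i₀ := mul_lt_mul_of_pos_left (hAx i₀) hc
    _ = w i₀ := div_mul_cancel₀ _ (hx i₀).ne'
  exact lt_irrefl _ this

theorem le_of_le_add_mulVec (hA : ∀ i j, 0 ≤ A i j) (hx0 : 0 ≤ x)
    (hAx : ∀ i, (A *ᵥ x) i < x i) {b z : ι → 𝕜} (hb : b + A *ᵥ x ≤ x)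
    (hz : z ≤ b + A *ᵥ z) : z ≤ x := by
  have hx : ∀ i, 0 < x i := fun i => (mulVec_nonneg_of_nonneg hA hx0 i).trans_lt (hAx i)
  have hsub : z - x ≤ A *ᵥ (z - x) := fun i => by
    have hbi : b i + (A *ᵥ x) i ≤ x i := hb i
    have hzi : z i ≤ b i + (A *ᵥ z) i := hz i
    rw [mulVec_sub, Pi.sub_apply, Pi.sub_apply]
    linarith
  exact sub_nonpos.mp (nonpos_of_le_mulVec hA hx hAx hsub)

end Matrix

open Matrix in
theorem constrained_input_bound_general {n l : ℕ}
    (γzu : Matrix (Fin l) (Fin n) ℝ) (γzv γψ : Matrix (Fin l) (Fin l) ℝ)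
    (hzu : ∀ i j, 0 ≤ γzu i j) (hzv : ∀ i j, 0 ≤ γzv i j)
    (hψ : ∀ i j, 0 ≤ γψ i j)
    (ubar : Fin n → ℝ) (zbar : Fin l → ℝ)
    (hubar : ∀ i, 0 ≤ ubar i) (hzbar : ∀ i, 0 ≤ zbar i)
    (hcond : ∀ i, (γzu.mulVec ubar) i < ((1 - γzv * γψ).mulVec zbar) i)
    (u : Fin n → ℝ) (z v : Fin l → ℝ)
    (hu : ∀ i, u i ≤ ubar i)
    (hz : ∀ i, z i ≤ (γzu.mulVec u + γzv.mulVec v) i)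
    (hv : ∀ i, v i ≤ (γψ.mulVec z) i) :
    ∀ i, z i ≤ zbar i := by
  have hA := mul_nonneg_of_nonneg hzv hψ
  have hsuper : ∀ i, (γzu *ᵥ ubar + (γzv * γψ) *ᵥ zbar) i < zbar i := fun i => by
    have hi := hcond i
    rw [sub_mulVec, one_mulVec, Pi.sub_apply] at hi
    rw [Pi.add_apply]
    linarith
  have hAz : ∀ i, ((γzv * γψ) *ᵥ zbar) i < zbar i := fun i =>
    (le_add_of_nonneg_left (mulVec_nonneg_of_nonneg hzu hubar i)).trans_lt (hsuper i)
  refine le_of_le_add_mulVec hA hzbar hAz (fun i => (hsuper i).le) ?_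
  calc z ≤ γzu *ᵥ u + γzv *ᵥ v := hz
    _ ≤ γzu *ᵥ ubar + γzv *ᵥ (γψ *ᵥ z) := add_le_add
        (mulVec_le_mulVec_of_nonneg hzu hu) (mulVec_le_mulVec_of_nonneg hzv hv)
    _ = γzu *ᵥ ubar + (γzv * γψ) *ᵥ z := by rw [mulVec_mulVec]

theorem constrained_input_bound {n l : ℕ}
    (γzu : Matrix (Fin l) (Fin n) ℝ) (γzv γψ : Matrix (Fin l) (Fin l) ℝ)
    (hzu : ∀ i j, 0 ≤ γzu i j) (hzv : ∀ i j, 0 ≤ γzv i j)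
    (hψ : ∀ i j, 0 ≤ γψ i j)
    (ubar : Fin n → ℝ) (zbar : Fin l → ℝ)
    (hubar : ∀ i, 0 ≤ ubar i) (hzbar : ∀ i, 0 ≤ zbar i)
    (hcond : ∀ i, (γzu.mulVec ubar) i < ((1 - γzv * γψ).mulVec zbar) i)
    (u : Fin n → ℝ) (z v : Fin l → ℝ)
    (hu0 : ∀ i, 0 ≤ u i) (hz0 : ∀ i, 0 ≤ z i) (hv0 : ∀ i, 0 ≤ v i)
    (hu : ∀ i, u i ≤ ubar i)
    (hz : ∀ i, z i ≤ (γzu.mulVec u + γzv.mulVec v) i)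
    (hv : ∀ i, v i ≤ (γψ.mulVec z) i) :
    ∀ i, z i ≤ zbar i :=
  constrained_input_bound_general γzu γzv γψ hzu hzv hψ ubar zbar hubar hzbar hcond u z v hu hz hv
end

section
/- For fixed φ* with |φ*| ≤ π/2, the function f(t) = ((t − sin t)/t)·cos|φ*| + ((1 − cos t)/t)·sin|φ*| is monotonically increasing in t on the interval 0 < t ≤ π − |φ*|. -/
/-!
Writing `a = |φ*|`, the addition formula for `sin (a + t)` turns the function into
`cos a - (sin (a + t) - sin a) / t`. The subtracted term is the slope of the secant of `sin`
from `a` to `a + t`; since `sin` is concave on `[0, π]`, this slope decreases as long as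
`a + t ≤ π`.
-/

open Real

lemma antitoneOn_sin_secant_slope {a : ℝ} (ha : 0 ≤ a) :
    AntitoneOn (fun t => (sin (a + t) - sin a) / t) (Set.Ioc 0 (π - a)) := by
  rintro t₁ ⟨ht₁, -⟩ t₂ ⟨ht₂, ht₂π⟩ h12
  have hmem {t : ℝ} (ht : 0 < t) (htπ : t ≤ π - a) : a + t ∈ {y ∈ Set.Icc 0 π | a < y} :=
    ⟨⟨by linarith, by linarith⟩, by linarith⟩
  have key := strictConcaveOn_sin_Icc.concaveOn.antitoneOn_slope_gt ⟨ha, by linarith⟩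
    (hmem ht₁ (h12.trans ht₂π)) (hmem ht₂ ht₂π) (by linarith)
  simpa only [slope_def_field, add_sub_cancel_left] using key

lemma gain_eq_cos_sub_sin_secant_slope (a : ℝ) {t : ℝ} (ht : t ≠ 0) :
    (t - sin t) / t * cos a + (1 - cos t) / t * sin a = cos a - (sin (a + t) - sin a) / t := by
  rw [sin_add]
  field_simp
  ring

theorem gain_function_monotone_general (φ : ℝ) :
    ∀ t₁ t₂ : ℝ, 0 < t₁ → t₁ ≤ t₂ → t₂ ≤ π - |φ| →
      (t₁ - sin t₁) / t₁ * cos |φ| + (1 - cos t₁) / t₁ * sin |φ| ≤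
      (t₂ - sin t₂) / t₂ * cos |φ| + (1 - cos t₂) / t₂ * sin |φ| := by
  intro t₁ t₂ ht₁ h12 ht₂
  have hpos₂ : 0 < t₂ := ht₁.trans_le h12
  rw [gain_eq_cos_sub_sin_secant_slope _ ht₁.ne', gain_eq_cos_sub_sin_secant_slope _ hpos₂.ne']
  exact sub_le_sub_left (antitoneOn_sin_secant_slope (abs_nonneg φ)
    ⟨ht₁, h12.trans ht₂⟩ ⟨hpos₂, ht₂⟩ h12) _

theorem gain_function_monotone (φ : ℝ) (hφ : |φ| ≤ π / 2) :
    ∀ t₁ t₂ : ℝ, 0 < t₁ → t₁ ≤ t₂ → t₂ ≤ π - |φ| →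
      (t₁ - sin t₁) / t₁ * cos |φ| + (1 - cos t₁) / t₁ * sin |φ| ≤
      (t₂ - sin t₂) / t₂ * cos |φ| + (1 - cos t₂) / t₂ * sin |φ| :=
  gain_function_monotone_general φ
end

section
/- Sector-bound gain formula: Let |φ*| ≤ π/2 and z̄ > 0 with |φ*| + z̄ ≤ π. Then for all z with 0 < |z| ≤ z̄, |(sin(z + φ*) − sin(φ*))/z − cos(φ*)| ≤ cos|φ*| − (sin(|φ*| + z̄) − sin|φ*|)/z̄. -/
/-!
For `s > 0`, `cos φ - (sin (φ + s) - sin φ) / s` is the gap between the tangent slope and a secant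
slope of `sin` at `φ`; by concavity of `sin` on `[0, π]` it grows with `s`, so it suffices to bound
the gain at `z` by this gap at `s = |z|`. For `0 ≤ φ ≤ π / 2` and `z > 0` the two agree, because
the secant slope lies below `cos φ`; for `z < 0` both required inequalities reduce, after expanding
`sin (φ ± s)`, to `cos s ≤ 1` and `sin s ≤ s`. Negative `φ` follows from the symmetry
`(φ, z) ↦ (-φ, -z)`.
-/
open Real Set

lemma sin_add_sub_sin_le_mul_cos {φ z : ℝ} (hs : 0 ≤ sin φ) (hc : 0 ≤ cos φ) (hz : 0 ≤ z) :
    sin (z + φ) - sin φ ≤ z * cos φ := by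
  have h1 : sin φ * cos z ≤ sin φ := mul_le_of_le_one_right hs (cos_le_one z)
  have h2 : cos φ * sin z ≤ cos φ * z := mul_le_mul_of_nonneg_left (sin_le hz) hc
  rw [sin_add]
  linarith

lemma sin_add_add_sin_sub_le {φ s : ℝ} (hs : 0 ≤ sin φ) :
    sin (φ + s) + sin (φ - s) ≤ 2 * sin φ := by
  have : sin φ * cos s ≤ sin φ := mul_le_of_le_one_right hs (cos_le_one s)
  rw [sin_add, sin_sub]
  linarith

lemma sin_add_sub_sin_sub_le {φ s : ℝ} (hc : 0 ≤ cos φ) (hs : 0 ≤ s) :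
    sin (φ + s) - sin (φ - s) ≤ 2 * s * cos φ := by
  have : cos φ * sin s ≤ cos φ * s := mul_le_mul_of_nonneg_left (sin_le hs) hc
  rw [sin_add, sin_sub]
  linarith

lemma antitoneOn_sin_secant {φ : ℝ} (hφ : 0 ≤ φ) :
    AntitoneOn (fun x => (sin (φ + x) - sin φ) / x) (Ioc 0 (π - φ)) := by
  intro a ha b hb hab
  have hconv : ConvexOn ℝ (Icc 0 π) (-sin) := strictConcaveOn_sin_Icc.concaveOn.neg
  have key := hconv.secant_mono (a := φ) (x := φ + a) (y := φ + b)
    ⟨hφ, by linarith [ha.1, ha.2]⟩ ⟨by linarith [ha.1], by linarith [ha.2]⟩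
    ⟨by linarith [hb.1], by linarith [hb.2]⟩
    (by linarith [ha.1]) (by linarith [hb.1]) (by linarith)
  simp only [Pi.neg_apply, neg_sub_neg, add_sub_cancel_left] at key
  rw [← neg_sub (sin (φ + a)), ← neg_sub (sin (φ + b)), neg_div, neg_div, neg_le_neg_iff] at key
  exact key

lemma gain_neg_neg (φ z : ℝ) :
    (sin (-z + -φ) - sin (-φ)) / -z - cos (-φ) = (sin (z + φ) - sin φ) / z - cos φ := by
  rw [← neg_add, sin_neg, sin_neg, cos_neg, ← neg_sub', neg_div_neg_eq]

lemma abs_gain_le_of_nonneg {φ z : ℝ} (hs : 0 ≤ sin φ) (hc : 0 ≤ cos φ) (hz : z ≠ 0) :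
    |(sin (z + φ) - sin φ) / z - cos φ| ≤ cos φ - (sin (φ + |z|) - sin φ) / |z| := by
  rcases hz.lt_or_gt with hneg | hpos
  · obtain ⟨s, rfl⟩ : ∃ s, z = -s := ⟨-z, by ring⟩
    have hs0 : 0 < s := by linarith
    have hsum := sin_add_add_sin_sub_le (s := s) hs
    have hdiff := sin_add_sub_sin_sub_le hc hs0.le
    rw [abs_neg, abs_of_pos hs0, neg_add_eq_sub, abs_le]
    constructor
    · field_simp
      linarith
    · field_simp
      linarith
  · have hslope : (sin (z + φ) - sin φ) / z ≤ cos φ :=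
      (div_le_iff₀' hpos).2 (sin_add_sub_sin_le_mul_cos hs hc hpos.le)
    rw [abs_of_pos hpos, abs_of_nonpos (sub_nonpos.2 hslope), add_comm φ z]
    exact (neg_sub _ _).le

lemma abs_gain_le {φ z : ℝ} (hφ : |φ| ≤ π / 2) (hz : z ≠ 0) :
    |(sin (z + φ) - sin φ) / z - cos φ| ≤ cos |φ| - (sin (|φ| + |z|) - sin |φ|) / |z| := by
  have hs : 0 ≤ sin |φ| := sin_nonneg_of_nonneg_of_le_pi (abs_nonneg φ) (by linarith [pi_pos])
  have hc : 0 ≤ cos |φ| := cos_nonneg_of_neg_pi_div_two_le_of_le (by linarith [abs_nonneg φ]) hφ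
  rcases le_or_gt 0 φ with hφ0 | hφ0
  · rw [abs_of_nonneg hφ0] at hs hc ⊢
    exact abs_gain_le_of_nonneg hs hc hz
  · rw [abs_of_neg hφ0] at hs hc ⊢
    simpa only [gain_neg_neg, abs_neg] using abs_gain_le_of_nonneg hs hc (neg_ne_zero.2 hz)

theorem sector_bound_gain_formula_general (φ zbar z : ℝ)
    (hφ : |φ| ≤ π / 2) (hsum : |φ| + zbar ≤ π)
    (hz0 : 0 < |z|) (hz : |z| ≤ zbar) :
    |(sin (z + φ) - sin φ) / z - cos φ| ≤
      cos |φ| - (sin (|φ| + zbar) - sin |φ|) / zbar := by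
  have hsecant := antitoneOn_sin_secant (abs_nonneg φ) ⟨hz0, by linarith⟩
    ⟨hz0.trans_le hz, by linarith⟩ hz
  calc |(sin (z + φ) - sin φ) / z - cos φ|
      ≤ cos |φ| - (sin (|φ| + |z|) - sin |φ|) / |z| := abs_gain_le hφ (abs_pos.1 hz0)
    _ ≤ cos |φ| - (sin (|φ| + zbar) - sin |φ|) / zbar := sub_le_sub_left hsecant _

theorem sector_bound_gain_formula (φ zbar z : ℝ)
    (hφ : |φ| ≤ π / 2) (hzbar : 0 < zbar) (hsum : |φ| + zbar ≤ π)
    (hz0 : 0 < |z|) (hz : |z| ≤ zbar) :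
    |(sin (z + φ) - sin φ) / z - cos φ| ≤
      cos |φ| - (sin (|φ| + zbar) - sin |φ|) / zbar :=
  sector_bound_gain_formula_general φ zbar z hφ hsum hz0 hz
end
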